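/- arXiv:1408.3751 — 6 statements merged into one kernel-verified Lean document; each statement's English description precedes it below -/
import Mathlib

section
/- Let n ≠ 0, p ≠ 2/n, c3 ≠ 0, and c1, c2 real. Then u(t,r) = (c2 + c3 t)^{−n/2} · exp(i c1 − i c3 r²/(4(c2 + c3 t)) + (2 i k/(c3(np−2)))(c2 + c3 t)^{1−np/2}) satisfies i u_t = u_{rr} + ((n−1)/r) u_r + k |u|^p u on any domain where c2 + c3 t > 0 and r > 0. -/
/-!
Write `a = c2 + c3 t`. For fixed `t` the solution is a Gaussian `C exp(α + β r²)` with
`β = -i c3 / (4a)`, and such a Gaussian satisfies `u_rr + ((n-1)/r) u_r = (2nβ + 4β²r²) u`.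
Differentiating in `t` gives `u_t = (-(n/2) c3/a + i c3² r²/(4a²) + K (1 - np/2) c3 a^(-np/2)) u`
with `K = 2ik/(c3(np-2))`. The exponent is purely imaginary, so `|u|^p = a^(-np/2)`; the
`r`-dependent terms match because `4β² = -c3²/(4a²)`, and `K (1 - np/2) c3 = -ik` turns the last
term of `i u_t` into the nonlinearity `k |u|^p u`.
-/

open Real

/-- The radial gNLS equation `i u_t = u_rr + ((n-1)/r) u_r + k |u|^p u` at a point `(t,r)`. -/
noncomputable def gnls (k p n : ℝ) (u : ℝ → ℝ → ℂ) (t r : ℝ) : Prop :=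
  Complex.I * deriv (fun s => u s r) t =
    deriv (deriv (fun s => u t s)) r
      + (((n - 1) / r : ℝ) : ℂ) * deriv (fun s => u t s) r
      + (k : ℂ) * ((‖u t r‖ ^ p : ℝ) : ℂ) * u t r

open Complex

section Gaussian

variable {f : ℝ → ℂ} {C α β : ℂ}

theorem hasDerivAt_of_eq_mul_cexp_add_mul_sq (hf : ∀ y, f y = C * cexp (α + β * (y : ℂ) ^ 2))
    (x : ℝ) : HasDerivAt f (2 * β * x * f x) x := by
  have hsq : HasDerivAt (fun y : ℝ => α + β * (y : ℂ) ^ 2) (β * (2 * x)) x := by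
    simpa using ((hasDerivAt_pow 2 (x : ℂ)).comp_ofReal.const_mul β).const_add α
  obtain rfl := funext hf
  exact (hsq.cexp.const_mul C).congr_deriv (by ring)

theorem deriv_deriv_of_eq_mul_cexp_add_mul_sq (hf : ∀ y, f y = C * cexp (α + β * (y : ℂ) ^ 2))
    (x : ℝ) : deriv (deriv f) x = (2 * β + 4 * β ^ 2 * x ^ 2) * f x := by
  have hf' (y : ℝ) := hasDerivAt_of_eq_mul_cexp_add_mul_sq hf y
  have hlin : HasDerivAt (fun y : ℝ => 2 * β * (y : ℂ)) (2 * β) x := by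
    simpa using (hasDerivAt_id (x : ℂ)).comp_ofReal.const_mul (2 * β)
  rw [funext fun y => (hf' y).deriv]
  exact (hlin.mul (hf' x)).deriv.trans (by ring)

theorem radialLaplacian_of_eq_mul_cexp_add_mul_sq
    (hf : ∀ y, f y = C * cexp (α + β * (y : ℂ) ^ 2)) (n : ℝ) {r : ℝ} (hr : r ≠ 0) :
    deriv (deriv f) r + (((n - 1) / r : ℝ) : ℂ) * deriv f r =
      (2 * n * β + 4 * β ^ 2 * r ^ 2) * f r := by
  rw [deriv_deriv_of_eq_mul_cexp_add_mul_sq hf, (hasDerivAt_of_eq_mul_cexp_add_mul_sq hf r).deriv]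
  have hrC : (r : ℂ) ≠ 0 := ofReal_ne_zero.mpr hr
  push_cast
  field_simp
  ring

end Gaussian

theorem hasDerivAt_of_eq_rpow_mul_cexp {f : ℝ → ℂ} {a : ℝ → ℝ} {a' t : ℝ} {q m : ℝ}
    {α β K : ℂ}
    (hf : ∀ s, f s = ((a s ^ q : ℝ) : ℂ) * cexp (α + β / a s + K * ((a s ^ m : ℝ) : ℂ)))
    (ha : HasDerivAt a a' t) (hne : a t ≠ 0) :
    HasDerivAt f
      ((q * a' / a t - β * a' / a t ^ 2 + K * m * a' * ((a t ^ (m - 1) : ℝ) : ℂ)) * f t) t := by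
  have hneC : (a t : ℂ) ≠ 0 := ofReal_ne_zero.mpr hne
  have hrpow (e : ℝ) :
      HasDerivAt (fun s => ((a s ^ e : ℝ) : ℂ)) ((e * a t ^ (e - 1) * a' : ℝ) : ℂ) t :=
    ((Real.hasDerivAt_rpow_const (Or.inl hne)).comp t ha).ofReal_comp
  have hinv : HasDerivAt (fun s => β / (a s : ℂ)) (-(β * a') / (a t : ℂ) ^ 2) t :=
    ((hasDerivAt_const t β).div ha.ofReal_comp hneC).congr_deriv (by ring)
  have hexp := (((hasDerivAt_const t α).add hinv).add ((hrpow m).const_mul K)).cexp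
  obtain rfl := funext hf
  refine ((hrpow q).mul hexp).congr_deriv ?_
  simp only [Pi.add_apply, Real.rpow_sub_one hne]
  push_cast
  field_simp
  ring

theorem norm_ofReal_mul_cexp_mul_I {x : ℝ} (hx : 0 ≤ x) (θ : ℝ) :
    ‖(x : ℂ) * cexp (θ * I)‖ = x := by
  rw [norm_mul, norm_exp_ofReal_mul_I, mul_one, norm_real, Real.norm_of_nonneg hx]

theorem mul_ne_of_ne_div {n p c : ℝ} (hc : c ≠ 0) (h : p ≠ c / n) : n * p ≠ c := by
  rintro rfl
  rcases eq_or_ne n 0 with rfl | hn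
  · exact hc (zero_mul p)
  · exact h (by field_simp)

section Solution

variable (k p n c1 c2 c3 : ℝ)

noncomputable def gnlsSolution (t r : ℝ) : ℂ :=
  (((c2 + c3 * t) ^ (-(n / 2)) : ℝ) : ℂ)
    * cexp (I * c1 - I * c3 * r ^ 2 / (4 * (c2 + c3 * t))
      + (2 * I * k / (c3 * (n * p - 2))) * (((c2 + c3 * t) ^ (1 - n * p / 2) : ℝ) : ℂ))

variable {k p n c1 c2 c3}

theorem hasDerivAt_gnlsSolution_time {t : ℝ} (r : ℝ) (ht : c2 + c3 * t ≠ 0) :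
    HasDerivAt (fun s => gnlsSolution k p n c1 c2 c3 s r)
      ((((-(n / 2) : ℝ) : ℂ) * c3 / ((c2 + c3 * t : ℝ) : ℂ)
          - -(I * c3 * r ^ 2 / 4) * c3 / ((c2 + c3 * t : ℝ) : ℂ) ^ 2
          + 2 * I * k / (c3 * (n * p - 2)) * ((1 - n * p / 2 : ℝ) : ℂ) * c3
            * (((c2 + c3 * t) ^ (1 - n * p / 2 - 1) : ℝ) : ℂ))
        * gnlsSolution k p n c1 c2 c3 t r) t := by
  have hlin : HasDerivAt (fun s => c2 + c3 * s) c3 t := by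
    simpa using ((hasDerivAt_id t).const_mul c3).const_add c2
  refine hasDerivAt_of_eq_rpow_mul_cexp (a := fun s => c2 + c3 * s) (α := I * c1)
    (fun s => ?_) hlin ht
  simp only [gnlsSolution, div_mul_eq_div_div]
  push_cast
  congr 2
  ring

theorem radialLaplacian_gnlsSolution (t : ℝ) {r : ℝ} (hr : r ≠ 0) :
    deriv (deriv (fun y => gnlsSolution k p n c1 c2 c3 t y)) r
        + (((n - 1) / r : ℝ) : ℂ) * deriv (fun y => gnlsSolution k p n c1 c2 c3 t y) r =
      (2 * n * (-(I * c3) / (4 * ((c2 + c3 * t : ℝ) : ℂ)))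
          + 4 * (-(I * c3) / (4 * ((c2 + c3 * t : ℝ) : ℂ))) ^ 2 * r ^ 2)
        * gnlsSolution k p n c1 c2 c3 t r := by
  refine radialLaplacian_of_eq_mul_cexp_add_mul_sq (C := (((c2 + c3 * t) ^ (-(n / 2)) : ℝ) : ℂ))
    (α := I * c1 + 2 * I * k / (c3 * (n * p - 2)) * (((c2 + c3 * t) ^ (1 - n * p / 2) : ℝ) : ℂ))
    (fun y => ?_) n hr
  simp only [gnlsSolution]
  push_cast
  congr 2
  ring

theorem norm_gnlsSolution {t : ℝ} (r : ℝ) (ht : 0 < c2 + c3 * t) :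
    ‖gnlsSolution k p n c1 c2 c3 t r‖ = (c2 + c3 * t) ^ (-(n / 2)) := by
  have hphase : gnlsSolution k p n c1 c2 c3 t r = (((c2 + c3 * t) ^ (-(n / 2)) : ℝ) : ℂ)
      * cexp (((c1 - c3 * r ^ 2 / (4 * (c2 + c3 * t))
        + 2 * k / (c3 * (n * p - 2)) * (c2 + c3 * t) ^ (1 - n * p / 2) : ℝ) : ℂ) * I) := by
    simp only [gnlsSolution]
    push_cast
    congr 2
    ring
  rw [hphase, norm_ofReal_mul_cexp_mul_I (Real.rpow_nonneg ht.le _)]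

end Solution

theorem stmt1_general (k p n c1 c2 c3 : ℝ)
    (hpn : p ≠ 2 / n) (hc3 : c3 ≠ 0) :
    ∀ t r : ℝ, 0 < c2 + c3 * t → 0 < r →
      gnls k p n
        (fun t r => (((c2 + c3 * t) ^ (-(n / 2)) : ℝ) : ℂ)
          * Complex.exp (Complex.I * c1
              - Complex.I * c3 * r ^ 2 / (4 * (c2 + c3 * t))
              + (2 * Complex.I * k / (c3 * (n * p - 2)))
                  * (((c2 + c3 * t) ^ (1 - n * p / 2) : ℝ) : ℂ))) t r := by
  intro t r ht hr
  change gnls k p n (gnlsSolution k p n c1 c2 c3) t r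
  have hpow : ((c2 + c3 * t) ^ (-(n / 2))) ^ p = (c2 + c3 * t) ^ (1 - n * p / 2 - 1) := by
    rw [← Real.rpow_mul ht.le]
    ring_nf
  have hK : 2 * I * k / (c3 * (n * p - 2)) * ((1 - n * p / 2 : ℝ) : ℂ) * c3 = -(I * k) := by
    have hc3C : (c3 : ℂ) ≠ 0 := ofReal_ne_zero.mpr hc3
    have hnpC : (n * p - 2 : ℂ) ≠ 0 := by
      exact_mod_cast sub_ne_zero.mpr (mul_ne_of_ne_div two_ne_zero hpn)
    push_cast
    field_simp
    ring
  unfold gnls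
  rw [(hasDerivAt_gnlsSolution_time r ht.ne').deriv, radialLaplacian_gnlsSolution t hr.ne',
    norm_gnlsSolution r ht, hpow]
  simp only [ofReal_neg, ofReal_div, ofReal_ofNat]
  linear_combination gnlsSolution k p n c1 c2 c3 t r * ((c2 + c3 * t) ^ (1 - n * p / 2 - 1) : ℝ)
    * (I * hK - k * I_sq)

theorem stmt1 (k p n c1 c2 c3 : ℝ) (hk : k ≠ 0) (hp : p ≠ 0) (hn : n ≠ 0)
    (hpn : p ≠ 2 / n) (hc3 : c3 ≠ 0) :
    ∀ t r : ℝ, 0 < c2 + c3 * t → 0 < r →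
      gnls k p n
        (fun t r => (((c2 + c3 * t) ^ (-(n / 2)) : ℝ) : ℂ)
          * Complex.exp (Complex.I * c1
              - Complex.I * c3 * r ^ 2 / (4 * (c2 + c3 * t))
              + (2 * Complex.I * k / (c3 * (n * p - 2)))
                  * (((c2 + c3 * t) ^ (1 - n * p / 2) : ℝ) : ℂ))) t r :=
  stmt1_general k p n c1 c2 c3 hpn hc3
end

section
/- Let n ≠ 2, 3, k(2−n) > 0, and p = 2(3−n)/(n−2). Then the static function u(t,r) = (k(n−3)²/(2−n)³)^{(2−n)/(6−2n)} · (r + c2 r^{3−n})^{(2−n)/(3−n)} · exp(i c1) satisfies i u_t = u_{rr} + ((n−1)/r) u_r + k |u|^p u on any domain where r > 0 and r + c2 r^{3−n} > 0. -/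
/-!
The solution is static, so `i u_t = 0` and, since `|e^{i c₁}| = 1`, only the real profile
`g = A W^α`, `W(r) = r + c₂ r^{3-n}`, `α = (2-n)/(3-n)`, has to satisfy
`g'' + ((n-1)/r) g' + k |g|^p g = 0`. For a power `W^α` the radial Laplacian is
`α W^{α-2} ((α-1) W'^2 + W (W'' + ((n-1)/r) W'))`, and `α p = -2` makes the nonlinear term
`k A^p W^{α-2}` carry the same power of `W`. For this `W` the bracket is the constant
`-(n-2)^2/(3-n)`, independent of `c₂` and `r`, and `A` is chosen so that `k A^p` cancels it.
-/

open Real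

open Filter Topology

theorem deriv_ofReal_comp (f : ℝ → ℝ) (x : ℝ) :
    deriv (fun y => (f y : ℂ)) x = deriv f x := by
  by_cases hf : DifferentiableAt ℝ f x
  · exact hf.hasDerivAt.ofReal_comp.deriv
  · have hfC : ¬DifferentiableAt ℝ (fun y => (f y : ℂ)) x := fun h => by
      have hre := Complex.reCLM.differentiableAt.comp x h
      simp only [Function.comp_def, Complex.reCLM_apply, Complex.ofReal_re] at hre
      exact hf hre
    rw [deriv_zero_of_not_differentiableAt hf, deriv_zero_of_not_differentiableAt hfC,
      Complex.ofReal_zero]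

noncomputable def radialLaplacian (n : ℝ) (g : ℝ → ℝ) (r : ℝ) : ℝ :=
  deriv (deriv g) r + (n - 1) / r * deriv g r

theorem radialLaplacian_const_mul (n A : ℝ) (g : ℝ → ℝ) (r : ℝ) :
    radialLaplacian n (fun x => A * g x) r = A * radialLaplacian n g r := by
  simp only [radialLaplacian, deriv_const_mul_field']
  ring

theorem gnls_ofReal_mul_of_radialLaplacian {k p n r : ℝ} {g : ℝ → ℝ} {E : ℂ}
    (hE : ‖E‖ = 1) (hg : radialLaplacian n g r + k * |g r| ^ p * g r = 0) (t : ℝ) :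
    gnls k p n (fun _ s => (g s : ℂ) * E) t r := by
  have hnorm : ‖(g r : ℂ) * E‖ = |g r| := by
    rw [norm_mul, hE, mul_one, Complex.norm_real, norm_eq_abs]
  have hgC := congrArg (fun x : ℝ => (x : ℂ) * E) hg
  simp only [radialLaplacian] at hgC
  unfold gnls
  simp only [deriv_const', deriv_mul_const_field', deriv_ofReal_comp, hnorm]
  push_cast at hgC ⊢
  linear_combination -hgC

section PowerAnsatz

variable {W W' : ℝ → ℝ} {W'' α r : ℝ}

theorem deriv_rpow_comp_eventuallyEq (hW : ∀ᶠ x in 𝓝 r, HasDerivAt W (W' x) x)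
    (hr : 0 < W r) :
    deriv (fun x => W x ^ α) =ᶠ[𝓝 r] fun x => α * W x ^ (α - 1) * W' x := by
  have hpos : ∀ᶠ x in 𝓝 r, 0 < W x :=
    hW.self_of_nhds.continuousAt.eventually (lt_mem_nhds hr)
  filter_upwards [hW, hpos] with x hx hx0
  rw [(hx.rpow_const (Or.inl hx0.ne')).deriv]
  ring

theorem radialLaplacian_rpow_comp (n : ℝ) (hW : ∀ᶠ x in 𝓝 r, HasDerivAt W (W' x) x)
    (hW' : HasDerivAt W' W'' r) (hr : 0 < W r) :
    radialLaplacian n (fun x => W x ^ α) r =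
      α * W r ^ (α - 2) * ((α - 1) * W' r ^ 2 + W r * (W'' + (n - 1) / r * W' r)) := by
  have hW1 : HasDerivAt (fun x => W x ^ (α - 1)) ((α - 1) * W r ^ (α - 2) * W' r) r :=
    (hW.self_of_nhds.rpow_const (Or.inl hr.ne')).congr_deriv
      (by rw [sub_sub, one_add_one_eq_two]; ring)
  have hsplit : W r ^ (α - 1) = W r ^ (α - 2) * W r := by
    rw [← rpow_add_one hr.ne']; ring_nf
  have hd : HasDerivAt (fun x => α * W x ^ (α - 1) * W' x)
      (α * ((α - 1) * W r ^ (α - 2) * W' r) * W' r + α * W r ^ (α - 1) * W'') r :=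
    (hW1.const_mul α).mul hW'
  have hd1 := deriv_rpow_comp_eventuallyEq (α := α) hW hr
  rw [radialLaplacian, hd1.deriv_eq, hd.deriv, hd1.self_of_nhds]
  linear_combination (α * W'' + (n - 1) / r * α * W' r) * hsplit

theorem radialLaplacian_add_eq_zero_of_rpow {n k p A : ℝ}
    (hW : ∀ᶠ x in 𝓝 r, HasDerivAt W (W' x) x)
    (hW' : HasDerivAt W' W'' r) (hr : 0 < W r) (hA : 0 < A) (hαp : α * p = -2)
    (hQ : α * ((α - 1) * W' r ^ 2 + W r * (W'' + (n - 1) / r * W' r)) + k * A ^ p = 0) :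
    radialLaplacian n (fun x => A * W x ^ α) r + k * |A * W r ^ α| ^ p * (A * W r ^ α) = 0 := by
  have hpow : |A * W r ^ α| ^ p * W r ^ α = A ^ p * W r ^ (α - 2) := by
    rw [abs_of_pos (by positivity), mul_rpow hA.le (by positivity), ← rpow_mul hr.le, hαp,
      mul_assoc, ← rpow_add hr, neg_add_eq_sub]
  calc radialLaplacian n (fun x => A * W x ^ α) r + k * |A * W r ^ α| ^ p * (A * W r ^ α)
      = A * W r ^ (α - 2) *
          (α * ((α - 1) * W' r ^ 2 + W r * (W'' + (n - 1) / r * W' r)) + k * A ^ p) := by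
        rw [radialLaplacian_const_mul, radialLaplacian_rpow_comp n hW hW' hr]
        linear_combination (k * A) * hpow
    _ = 0 := by rw [hQ, mul_zero]

end PowerAnsatz

theorem hasDerivAt_add_const_mul_rpow (c m : ℝ) {x : ℝ} (hx : 0 < x) :
    HasDerivAt (fun y => y + c * y ^ m) (1 + c * m * x ^ (m - 1)) x :=
  ((hasDerivAt_id' x).add
    ((hasDerivAt_rpow_const (p := m) (Or.inl hx.ne')).const_mul c)).congr_deriv (by ring)

theorem hasDerivAt_one_add_const_mul_rpow (c m : ℝ) {x : ℝ} (hx : 0 < x) :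
    HasDerivAt (fun y => 1 + c * m * y ^ (m - 1)) (c * m * (m - 1) * x ^ (m - 2)) x :=
  (((hasDerivAt_rpow_const (p := m - 1) (Or.inl hx.ne')).const_mul (c * m)).const_add
    1).congr_deriv (by rw [sub_sub, one_add_one_eq_two]; ring)

/- `x + c x ^ (3 - n) = x (1 + c x ^ (2 - n))` and `x ^ (2 - n)` is radially harmonic in
dimension `n`, which is why `c` drops out. -/
theorem rpow_ansatz_coeff_eq {n c r : ℝ} (hn : n ≠ 3) (hr : 0 < r) :
    (2 - n) / (3 - n) * (((2 - n) / (3 - n) - 1) * (1 + c * (3 - n) * r ^ (3 - n - 1)) ^ 2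
      + (r + c * r ^ (3 - n)) * (c * (3 - n) * (3 - n - 1) * r ^ (3 - n - 2)
        + (n - 1) / r * (1 + c * (3 - n) * r ^ (3 - n - 1))))
      = -(2 - n) ^ 3 / (3 - n) ^ 2 := by
  have h3n : (3 : ℝ) - n ≠ 0 := sub_ne_zero.mpr (Ne.symm hn)
  have e1 : r ^ (3 - n - 1) = r ^ (2 - n) := by ring_nf
  have e0 : r ^ (3 - n) = r * r ^ (2 - n) := by
    rw [show (3 : ℝ) - n = 1 + (2 - n) by ring, rpow_add hr, rpow_one]
  have e2 : r ^ (3 - n - 2) = r ^ (2 - n) / r := by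
    rw [show (3 : ℝ) - n - 2 = (2 - n) + -1 by ring, rpow_add hr, rpow_neg_one, div_eq_mul_inv]
  rw [e1, e0, e2]
  field_simp
  ring

section Amplitude

variable {k n : ℝ}

theorem amplitude_base_pos (hn3 : n ≠ 3) (hkn : 0 < k * (2 - n)) :
    0 < k * (n - 3) ^ 2 / (2 - n) ^ 3 := by
  have h2n : 2 - n ≠ 0 := right_ne_zero_of_mul hkn.ne'
  have h3n : n - 3 ≠ 0 := sub_ne_zero.mpr hn3
  rw [show k * (n - 3) ^ 2 / (2 - n) ^ 3 = k * (2 - n) * (n - 3) ^ 2 / (2 - n) ^ 4 by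
    field_simp]
  positivity

theorem mul_amplitude_rpow (hn3 : n ≠ 3) (hkn : 0 < k * (2 - n)) :
    k * ((k * (n - 3) ^ 2 / (2 - n) ^ 3) ^ ((2 - n) / (6 - 2 * n))) ^ (2 * (3 - n) / (n - 2))
      = (2 - n) ^ 3 / (3 - n) ^ 2 := by
  have hk : k ≠ 0 := left_ne_zero_of_mul hkn.ne'
  have h2n : n - 2 ≠ 0 := fun h => (right_ne_zero_of_mul hkn.ne') (by linarith)
  have h3n : 3 - n ≠ 0 := sub_ne_zero.mpr (Ne.symm hn3)
  have hexp : (2 - n) / (6 - 2 * n) * (2 * (3 - n) / (n - 2)) = -1 := by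
    rw [show (6 : ℝ) - 2 * n = 2 * (3 - n) by ring]
    field_simp
    ring
  rw [← rpow_mul (amplitude_base_pos hn3 hkn).le, hexp, rpow_neg_one]
  field_simp
  ring

end Amplitude

theorem stmt4_general (k n c1 c2 : ℝ) (hn3 : n ≠ 3)
    (hkn : 0 < k * (2 - n)) :
    ∀ t r : ℝ, 0 < r → 0 < r + c2 * (r ^ (3 - n) : ℝ) →
      gnls k (2 * (3 - n) / (n - 2)) n
        (fun _ r => (((k * (n - 3) ^ 2 / (2 - n) ^ 3) ^ ((2 - n) / (6 - 2 * n)) : ℝ) : ℂ)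
          * (((r + c2 * (r ^ (3 - n) : ℝ)) ^ ((2 - n) / (3 - n)) : ℝ) : ℂ)
          * Complex.exp (Complex.I * c1)) t r := by
  intro t r hr hW
  have h2n : n - 2 ≠ 0 := fun h => (right_ne_zero_of_mul hkn.ne') (by linarith)
  have h3n : 3 - n ≠ 0 := sub_ne_zero.mpr (Ne.symm hn3)
  have hWd : ∀ᶠ x in 𝓝 r, HasDerivAt (fun y => y + c2 * y ^ (3 - n))
      (1 + c2 * (3 - n) * x ^ (3 - n - 1)) x :=
    (lt_mem_nhds hr).mono fun x hx => hasDerivAt_add_const_mul_rpow c2 (3 - n) hx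
  have hαp : (2 - n) / (3 - n) * (2 * (3 - n) / (n - 2)) = -2 := by
    field_simp
    ring
  have hsol := radialLaplacian_add_eq_zero_of_rpow (n := n) (k := k) hWd
    (hasDerivAt_one_add_const_mul_rpow c2 (3 - n) hr) hW
    (rpow_pos_of_pos (amplitude_base_pos hn3 hkn) ((2 - n) / (6 - 2 * n))) hαp
    (by rw [rpow_ansatz_coeff_eq hn3 hr, mul_amplitude_rpow hn3 hkn]; ring)
  simpa only [Complex.ofReal_mul] using
    gnls_ofReal_mul_of_radialLaplacian (E := Complex.exp (Complex.I * c1))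
      (by simp [Complex.norm_exp]) hsol t

theorem stmt4 (k n c1 c2 : ℝ) (hk : k ≠ 0) (hn2 : n ≠ 2) (hn3 : n ≠ 3)
    (hkn : 0 < k * (2 - n)) :
    ∀ t r : ℝ, 0 < r → 0 < r + c2 * (r ^ (3 - n) : ℝ) →
      gnls k (2 * (3 - n) / (n - 2)) n
        (fun _ r => (((k * (n - 3) ^ 2 / (2 - n) ^ 3) ^ ((2 - n) / (6 - 2 * n)) : ℝ) : ℂ)
          * (((r + c2 * (r ^ (3 - n) : ℝ)) ^ ((2 - n) / (3 - n)) : ℝ) : ℂ)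
          * Complex.exp (Complex.I * c1)) t r :=
  stmt4_general k n c1 c2 hn3 hkn
end

section
/- Let n = 2, p = −1. Then u(t,r) = (−k r²/4 + c3 ln r + c2) exp(i c1) satisfies i u_t = u_{rr} + (1/r) u_r + k u/|u| on any domain where r > 0 and −k r²/4 + c3 ln r + c2 > 0. -/
open Real

/-- The radial gNLS equation with power `p = -1`:
`i u_t = u_rr + (m/r) u_r + k u/|u|` at a point `(t,r)`, where `m = n - 1`. -/
noncomputable def gnlsM1 (k m : ℝ) (u : ℝ → ℝ → ℂ) (t r : ℝ) : Prop :=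
  Complex.I * deriv (fun s => u s r) t =
    deriv (deriv (fun s => u t s)) r
      + ((m / r : ℝ) : ℂ) * deriv (fun s => u t s) r
      + (k : ℂ) * (u t r / ((‖u t r‖ : ℝ) : ℂ))

/-! The profile does not depend on `t` and is positive, so `u / |u|` is the constant phase
`exp (i c₁)` and the equation collapses to the real radial ODE `f'' + f'/r + k = 0`. The profile
`-k r²/4 + c₃ log r + c₂` solves it because `log r` is harmonic in the plane and
`(r²)'' + (r²)'/r = 4`. -/

open Filter Topology

theorem gnlsM1_ofReal_mul_exp {k m c r t f'' : ℝ} {f f' : ℝ → ℝ}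
    (hf : ∀ᶠ s in 𝓝 r, HasDerivAt f (f' s) s) (hf' : HasDerivAt f' f'' r) (hpos : 0 < f r)
    (hode : f'' + m / r * f' r + k = 0) :
    gnlsM1 k m (fun _ s => (f s : ℂ) * Complex.exp (Complex.I * c)) t r := by
  set E := Complex.exp (Complex.I * c)
  have hd1 : deriv (fun s => (f s : ℂ) * E) =ᶠ[𝓝 r] fun s => (f' s : ℂ) * E :=
    hf.mono fun s hs => (hs.ofReal_comp.mul_const E).deriv
  have hd2 : deriv (deriv fun s => (f s : ℂ) * E) r = (f'' : ℂ) * E := by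
    rw [hd1.deriv_eq]
    exact (hf'.ofReal_comp.mul_const E).deriv
  have hnorm : ‖(f r : ℂ) * E‖ = f r := by
    rw [norm_mul, Complex.norm_exp_I_mul_ofReal, mul_one, Complex.norm_real, norm_of_nonneg hpos.le]
  have hphase : (f r : ℂ) * E / (f r : ℂ) = E :=
    mul_div_cancel_left₀ E (Complex.ofReal_ne_zero.mpr hpos.ne')
  unfold gnlsM1
  rw [deriv_const, hd2, hd1.eq_of_nhds, hnorm, hphase, mul_zero]
  have hode' : (f'' : ℂ) + m / r * f' r + k = 0 := by exact_mod_cast hode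
  push_cast
  linear_combination (-E) * hode'

theorem hasDerivAt_logProfile (k c2 c3 : ℝ) {s : ℝ} (hs : 0 < s) :
    HasDerivAt (fun s => -k * s ^ 2 / 4 + c3 * Real.log s + c2) (-k * s / 2 + c3 / s) s := by
  have := ((((hasDerivAt_pow 2 s).const_mul (-k)).div_const 4).add
    ((hasDerivAt_log hs.ne').const_mul c3)).add_const c2
  exact this.congr_deriv (by simp only [Nat.cast_ofNat, Nat.add_one_sub_one, pow_one]; ring)

theorem hasDerivAt_logProfile_deriv (k c3 : ℝ) {s : ℝ} (hs : 0 < s) :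
    HasDerivAt (fun s => -k * s / 2 + c3 / s) (-k / 2 - c3 / s ^ 2) s := by
  have := (((hasDerivAt_id s).const_mul (-k)).div_const 2).add
    ((hasDerivAt_inv hs.ne').const_mul c3)
  exact this.congr_deriv (by ring)

theorem stmt7_general (k c1 c2 c3 : ℝ) :
    ∀ t r : ℝ, 0 < r → 0 < -k * r ^ 2 / 4 + c3 * Real.log r + c2 →
      gnlsM1 k 1
        (fun _ r => ((-k * r ^ 2 / 4 + c3 * Real.log r + c2 : ℝ) : ℂ)
          * Complex.exp (Complex.I * c1)) t r := by
  intro t r hr hpos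
  refine gnlsM1_ofReal_mul_exp (f := fun s => -k * s ^ 2 / 4 + c3 * Real.log s + c2)
    ((eventually_gt_nhds hr).mono fun s hs => hasDerivAt_logProfile k c2 c3 hs)
    (hasDerivAt_logProfile_deriv k c3 hr) hpos ?_
  field_simp
  ring

theorem stmt7 (k c1 c2 c3 : ℝ) (hk : k ≠ 0) :
    ∀ t r : ℝ, 0 < r → 0 < -k * r ^ 2 / 4 + c3 * Real.log r + c2 →
      gnlsM1 k 1
        (fun _ r => ((-k * r ^ 2 / 4 + c3 * Real.log r + c2 : ℝ) : ℂ)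
          * Complex.exp (Complex.I * c1)) t r :=
  stmt7_general k c1 c2 c3
end

section
/- Let n = 3, p = −1. Then u(t,r) = (c2/r) exp(i c1 − i k t r/c2 + i k² t³/(3 c2²)) satisfies i u_t = u_{rr} + (2/r) u_r + k u/|u| for all t and all r > 0, where c2 > 0. -/
/-!
In the radial variable the solution has the form `u = (a/r) e^{cr}` with `c = -ikt/c₂`.
Since `r u` is a pure exponential, `u_rr + (2/r) u_r = (r u)_rr / r = c² u = -(kt/c₂)² u`.
Moreover `|u| = c₂/r`, so `k u/|u| = (kr/c₂) u`, while `i u_t = (kr/c₂ - k²t²/c₂²) u`; the cubic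
term of the phase is exactly what balances the radial Laplacian.
-/

open Real

open Complex

section RadialLaplacian

variable (a c : ℂ) {r : ℝ}

theorem hasDerivAt_div_mul_cexp_mul (hr : r ≠ 0) :
    HasDerivAt (fun s : ℝ => a / s * cexp (c * s))
      ((c - (r : ℂ)⁻¹) * (a / r * cexp (c * r))) r := by
  have hrC : (r : ℂ) ≠ 0 := ofReal_ne_zero.mpr hr
  have hid : HasDerivAt (fun s : ℝ => (s : ℂ)) 1 r := (hasDerivAt_id r).ofReal_comp
  refine (((hasDerivAt_inv hrC).comp_ofReal.const_mul a).mul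
    ((hid.const_mul c).cexp)).congr_deriv ?_
  field_simp
  ring

theorem deriv_deriv_div_mul_cexp_mul (hr : r ≠ 0) :
    deriv (deriv fun s : ℝ => a / s * cexp (c * s)) r =
      ((r : ℂ)⁻¹ ^ 2 + (c - (r : ℂ)⁻¹) ^ 2) * (a / r * cexp (c * r)) := by
  have hrC : (r : ℂ) ≠ 0 := ofReal_ne_zero.mpr hr
  have hderiv : deriv (fun s : ℝ => a / s * cexp (c * s)) =ᶠ[nhds r]
      fun s : ℝ => (c - (s : ℂ)⁻¹) * (a / s * cexp (c * s)) := by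
    filter_upwards [isOpen_ne.mem_nhds hr] with s hs
    exact (hasDerivAt_div_mul_cexp_mul a c hs).deriv
  rw [hderiv.deriv_eq]
  refine (((hasDerivAt_const r c).fun_sub (hasDerivAt_inv hrC).comp_ofReal).mul
    (hasDerivAt_div_mul_cexp_mul a c hr)).deriv.trans ?_
  ring

theorem radialLaplacian_div_mul_cexp_mul (hr : r ≠ 0) :
    deriv (deriv fun s : ℝ => a / s * cexp (c * s)) r
        + ((2 / r : ℝ) : ℂ) * deriv (fun s : ℝ => a / s * cexp (c * s)) r =
      c ^ 2 * (a / r * cexp (c * r)) := by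
  rw [deriv_deriv_div_mul_cexp_mul a c hr, (hasDerivAt_div_mul_cexp_mul a c hr).deriv]
  have hrC : (r : ℂ) ≠ 0 := ofReal_ne_zero.mpr hr
  push_cast
  field_simp
  ring

end RadialLaplacian

noncomputable def gnlsM1Solution (k c1 c2 : ℝ) (t r : ℝ) : ℂ :=
  ((c2 / r : ℝ) : ℂ) * cexp (I * c1 - I * k * t * r / c2 + I * k ^ 2 * t ^ 3 / (3 * c2 ^ 2))

section Solution

variable (k c1 : ℝ) {c2 : ℝ}

theorem gnlsM1Solution_eq_div_mul_cexp_mul (t r : ℝ) :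
    gnlsM1Solution k c1 c2 t r =
      c2 * cexp (I * c1 + I * k ^ 2 * t ^ 3 / (3 * c2 ^ 2)) / r * cexp (-I * k * t / c2 * r) := by
  rw [gnlsM1Solution, show I * c1 - I * k * t * r / c2 + I * k ^ 2 * t ^ 3 / (3 * c2 ^ 2) =
    I * c1 + I * k ^ 2 * t ^ 3 / (3 * c2 ^ 2) + -I * k * t / c2 * r by ring, Complex.exp_add]
  push_cast
  ring

theorem hasDerivAt_gnlsM1Solution_time (hc2 : c2 ≠ 0) (t r : ℝ) :
    HasDerivAt (fun s => gnlsM1Solution k c1 c2 s r)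
      (I * (-k * r / c2 + k ^ 2 * t ^ 2 / c2 ^ 2) * gnlsM1Solution k c1 c2 t r) t := by
  have hc2C : (c2 : ℂ) ≠ 0 := ofReal_ne_zero.mpr hc2
  have hid : HasDerivAt (fun s : ℝ => (s : ℂ)) 1 t := (hasDerivAt_id t).ofReal_comp
  have hcube : HasDerivAt (fun s : ℝ => (s : ℂ) ^ 3) (3 * (t : ℂ) ^ 2) t := by
    simpa using (hasDerivAt_pow 3 (t : ℂ)).comp_ofReal
  have hphase := ((hasDerivAt_const t (I * c1)).fun_sub
    (((hid.const_mul (I * k)).mul_const (r : ℂ)).div_const (c2 : ℂ))).fun_add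
    ((hcube.const_mul (I * k ^ 2)).div_const (3 * (c2 : ℂ) ^ 2))
  refine (hphase.cexp.const_mul ((c2 / r : ℝ) : ℂ)).congr_deriv ?_
  rw [gnlsM1Solution]
  field_simp
  ring

theorem norm_gnlsM1Solution {r : ℝ} (hc2 : 0 < c2) (hr : 0 < r) (t : ℝ) :
    ‖gnlsM1Solution k c1 c2 t r‖ = c2 / r := by
  rw [gnlsM1Solution, norm_mul, norm_real, norm_of_nonneg (div_pos hc2 hr).le,
    show I * c1 - I * k * t * r / c2 + I * k ^ 2 * t ^ 3 / (3 * c2 ^ 2) =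
      ((c1 - k * t * r / c2 + k ^ 2 * t ^ 3 / (3 * c2 ^ 2) : ℝ) : ℂ) * I by push_cast; ring,
    norm_exp_ofReal_mul_I, mul_one]

theorem gnlsM1_gnlsM1Solution {r : ℝ} (hc2 : 0 < c2) (hr : 0 < r) (t : ℝ) :
    gnlsM1 k 2 (gnlsM1Solution k c1 c2) t r := by
  have hrC : (r : ℂ) ≠ 0 := ofReal_ne_zero.mpr hr.ne'
  have hc2C : (c2 : ℂ) ≠ 0 := ofReal_ne_zero.mpr hc2.ne'
  rw [gnlsM1, (hasDerivAt_gnlsM1Solution_time k c1 hc2.ne' t r).deriv,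
    norm_gnlsM1Solution k c1 hc2 hr]
  simp only [gnlsM1Solution_eq_div_mul_cexp_mul]
  rw [radialLaplacian_div_mul_cexp_mul _ _ hr.ne']
  generalize c2 * cexp (I * c1 + I * k ^ 2 * t ^ 3 / (3 * c2 ^ 2)) / r
    * cexp (-I * k * t / c2 * r) = u
  push_cast
  field_simp
  linear_combination (-k * r * c2 * u : ℂ) * I_sq

end Solution

theorem stmt9_general (k c1 c2 : ℝ) (hc2 : 0 < c2) :
    ∀ t r : ℝ, 0 < r →
      gnlsM1 k 2
        (fun t r => ((c2 / r : ℝ) : ℂ)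
          * Complex.exp (Complex.I * c1 - Complex.I * k * t * r / c2
              + Complex.I * k ^ 2 * t ^ 3 / (3 * c2 ^ 2))) t r :=
  fun t _ hr => gnlsM1_gnlsM1Solution k c1 hc2 hr t

theorem stmt9 (k c1 c2 : ℝ) (hk : k ≠ 0) (hc2 : 0 < c2) :
    ∀ t r : ℝ, 0 < r →
      gnlsM1 k 2
        (fun t r => ((c2 / r : ℝ) : ℂ)
          * Complex.exp (Complex.I * c1 - Complex.I * k * t * r / c2
              + Complex.I * k ^ 2 * t ^ 3 / (3 * c2 ^ 2))) t r :=
  stmt9_general k c1 c2 hc2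
end

section
/- Let n = 3, p = −1, c2 > 0. Then u(t,r) = (c2/(r t^{1/2})) · exp(i c1 − i r²/(4t) − 2 i k r t^{3/2}/(5 c2) + i k² t⁴/(25 c2²)) satisfies i u_t = u_{rr} + (2/r) u_r + k u/|u| on the domain t > 0, r > 0. -/
/-!
Write `u = ρ e^{iθ}` with `ρ = c2 / (r √t) > 0`. Then `u / |u| = e^{iθ}`, and the equation splits
into `-ρ θ_t = ρ_rr + (2/r) ρ_r - ρ θ_r² + k` and `ρ_t = 2 ρ_r θ_r + ρ θ_rr + (2/r) ρ θ_r`.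
Since `ρ` is a multiple of `1/r`, the three-dimensional radial Laplacian kills it and the terms
`2 ρ_r θ_r + (2/r) ρ θ_r` cancel, so what is left is `ρ_t = ρ θ_rr` and the eikonal equation
`θ_t = θ_r² - k / ρ`, both direct computations for the quadratic-in-`r` phase `θ`.
-/

open Real

open Complex in
theorem HasDerivAt.mul_exp_ofReal_mul_I {a : ℝ → ℂ} {θ : ℝ → ℝ} {a' : ℂ} {θ' x : ℝ}
    (ha : HasDerivAt a a' x) (hθ : HasDerivAt θ θ' x) :
    HasDerivAt (fun s => a s * Complex.exp ((θ s : ℂ) * I))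
      ((a' + a x * (θ' : ℂ) * I) * Complex.exp ((θ x : ℂ) * I)) x :=
  (ha.mul (hθ.ofReal_comp.mul_const I).cexp).congr_deriv (by ring)

open Complex in
theorem gnlsM1_of_amplitude_phase {k m t r : ℝ} {ρ θ : ℝ → ℝ → ℝ} {ρr θr : ℝ → ℝ}
    {ρt θt ρrr θrr : ℝ}
    (hρt : HasDerivAt (fun s => ρ s r) ρt t) (hθt : HasDerivAt (fun s => θ s r) θt t)
    (hρr : ∀ᶠ s in nhds r, HasDerivAt (ρ t) (ρr s) s)
    (hθr : ∀ᶠ s in nhds r, HasDerivAt (θ t) (θr s) s)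
    (hρrr : HasDerivAt ρr ρrr r) (hθrr : HasDerivAt θr θrr r) (hρ : 0 < ρ t r)
    (hre : -(ρ t r * θt) = ρrr + m / r * ρr r - ρ t r * θr r ^ 2 + k)
    (him : ρt = 2 * ρr r * θr r + ρ t r * θrr + m / r * (ρ t r * θr r)) :
    gnlsM1 k m (fun t r => (ρ t r : ℂ) * exp (θ t r * I)) t r := by
  have hut := HasDerivAt.mul_exp_ofReal_mul_I hρt.ofReal_comp hθt
  have hur : deriv (fun s => (ρ t s : ℂ) * exp (θ t s * I)) =ᶠ[nhds r]
      fun s => ((ρr s : ℂ) + ρ t s * θr s * I) * exp (θ t s * I) := by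
    filter_upwards [hρr, hθr] with s hρs hθs
    exact (HasDerivAt.mul_exp_ofReal_mul_I hρs.ofReal_comp hθs).deriv
  have hurr := HasDerivAt.mul_exp_ofReal_mul_I (a := fun s => (ρr s : ℂ) + ρ t s * θr s * I)
    (hρrr.ofReal_comp.add ((hρr.self_of_nhds.ofReal_comp.mul hθrr.ofReal_comp).mul_const I))
    hθr.self_of_nhds
  have hnorm : ‖(ρ t r : ℂ) * exp (θ t r * I)‖ = ρ t r := by
    rw [norm_mul, norm_exp_ofReal_mul_I, mul_one, norm_real, Real.norm_of_nonneg hρ.le]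
  simp only [gnlsM1]
  rw [hut.deriv, hur.deriv_eq, hurr.deriv, hur.self_of_nhds, hnorm,
    mul_div_cancel_left₀ _ (ofReal_ne_zero.2 hρ.ne')]
  have hreC := congrArg ofReal hre
  have himC := congrArg ofReal him
  push_cast at hreC himC ⊢
  linear_combination exp (θ t r * I) * (I * himC + hreC + (ρ t r * θt - ρ t r * θr r ^ 2) * I_sq)

noncomputable def gnlsAmplitude (c2 t r : ℝ) : ℝ := c2 / (r * t ^ ((1 : ℝ) / 2))

noncomputable def gnlsPhase (k c1 c2 t r : ℝ) : ℝ :=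
  c1 - r ^ 2 / (4 * t) - 2 * k * r * t ^ ((3 : ℝ) / 2) / (5 * c2) + k ^ 2 * t ^ 4 / (25 * c2 ^ 2)

section
variable {k c1 c2 t r : ℝ}

theorem hasDerivAt_gnlsAmplitude_time (ht : 0 < t) (hr : r ≠ 0) :
    HasDerivAt (fun s => gnlsAmplitude c2 s r) (-gnlsAmplitude c2 t r / (2 * t)) t := by
  have hσ : t ^ ((1 : ℝ) / 2) ≠ 0 := (rpow_pos_of_pos ht _).ne'
  refine ((hasDerivAt_const t c2).div
    ((hasDerivAt_rpow_const (p := 1 / 2) (Or.inl ht.ne')).const_mul r)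
    (mul_ne_zero hr hσ)).congr_deriv ?_
  rw [rpow_sub_one ht.ne', gnlsAmplitude]
  field_simp
  ring

theorem hasDerivAt_gnlsPhase_time (ht : 0 < t) :
    HasDerivAt (fun s => gnlsPhase k c1 c2 s r)
      (r ^ 2 / (4 * t ^ 2) - 3 * k * r * t ^ ((1 : ℝ) / 2) / (5 * c2)
        + 4 * k ^ 2 * t ^ 3 / (25 * c2 ^ 2)) t := by
  have h := (((hasDerivAt_const t c1).sub
    ((hasDerivAt_const t (r ^ 2)).div ((hasDerivAt_id t).const_mul 4) (by simp [ht.ne']))).sub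
    (((hasDerivAt_rpow_const (p := 3 / 2) (Or.inl ht.ne')).const_mul (2 * k * r)).div_const
      (5 * c2))).add (((hasDerivAt_pow 4 t).const_mul (k ^ 2)).div_const (25 * c2 ^ 2))
  refine h.congr_deriv ?_
  norm_num
  field_simp

theorem hasDerivAt_gnlsAmplitude_radius (ht : 0 < t) (hr : r ≠ 0) :
    HasDerivAt (gnlsAmplitude c2 t) (-c2 / (r ^ 2 * t ^ ((1 : ℝ) / 2))) r := by
  have hσ : t ^ ((1 : ℝ) / 2) ≠ 0 := (rpow_pos_of_pos ht _).ne'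
  refine ((hasDerivAt_const r c2).div ((hasDerivAt_id r).mul_const _)
    (mul_ne_zero hr hσ)).congr_deriv ?_
  simp only [id]
  field_simp
  ring

theorem hasDerivAt_gnlsAmplitude_radius_deriv (ht : 0 < t) (hr : r ≠ 0) :
    HasDerivAt (fun s => -c2 / (s ^ 2 * t ^ ((1 : ℝ) / 2)))
      (2 * c2 / (r ^ 3 * t ^ ((1 : ℝ) / 2))) r := by
  have hσ : t ^ ((1 : ℝ) / 2) ≠ 0 := (rpow_pos_of_pos ht _).ne'
  refine ((hasDerivAt_const r (-c2)).div ((hasDerivAt_pow 2 r).mul_const _)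
    (mul_ne_zero (pow_ne_zero 2 hr) hσ)).congr_deriv ?_
  field_simp
  ring

theorem hasDerivAt_gnlsPhase_radius (s : ℝ) :
    HasDerivAt (gnlsPhase k c1 c2 t)
      (-s / (2 * t) - 2 * k * t ^ ((3 : ℝ) / 2) / (5 * c2)) s := by
  have h := (((hasDerivAt_const s c1).sub ((hasDerivAt_pow 2 s).div_const (4 * t))).sub
    (((hasDerivAt_id s).const_mul (2 * k) |>.mul_const (t ^ ((3 : ℝ) / 2))).div_const (5 * c2))).add
    (hasDerivAt_const s (k ^ 2 * t ^ 4 / (25 * c2 ^ 2)))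
  refine h.congr_deriv ?_
  ring

theorem hasDerivAt_gnlsPhase_radius_deriv :
    HasDerivAt (fun s => -s / (2 * t) - 2 * k * t ^ ((3 : ℝ) / 2) / (5 * c2)) (-1 / (2 * t)) r :=
  ((hasDerivAt_id r).neg.div_const (2 * t)).sub_const _

theorem gnlsSolution_re (hc2 : c2 ≠ 0) (ht : 0 < t) (hr : r ≠ 0) :
    -(gnlsAmplitude c2 t r * (r ^ 2 / (4 * t ^ 2) - 3 * k * r * t ^ ((1 : ℝ) / 2) / (5 * c2)
        + 4 * k ^ 2 * t ^ 3 / (25 * c2 ^ 2)))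
      = 2 * c2 / (r ^ 3 * t ^ ((1 : ℝ) / 2)) + 2 / r * (-c2 / (r ^ 2 * t ^ ((1 : ℝ) / 2)))
        - gnlsAmplitude c2 t r * (-r / (2 * t) - 2 * k * t ^ ((3 : ℝ) / 2) / (5 * c2)) ^ 2 + k := by
  obtain ⟨σ, hσ, rfl⟩ : ∃ σ, 0 < σ ∧ σ ^ 2 = t := ⟨√t, sqrt_pos.2 ht, sq_sqrt ht.le⟩
  have hpow (y : ℝ) : (σ ^ 2) ^ y = σ ^ (2 * y) := by
    rw [← rpow_natCast, ← rpow_mul hσ.le, Nat.cast_ofNat]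
  rw [gnlsAmplitude, hpow, hpow]
  norm_num
  field_simp
  ring

theorem gnlsSolution_im (ht : 0 < t) (hr : r ≠ 0) :
    -gnlsAmplitude c2 t r / (2 * t)
      = 2 * (-c2 / (r ^ 2 * t ^ ((1 : ℝ) / 2)))
          * (-r / (2 * t) - 2 * k * t ^ ((3 : ℝ) / 2) / (5 * c2))
        + gnlsAmplitude c2 t r * (-1 / (2 * t))
        + 2 / r
          * (gnlsAmplitude c2 t r * (-r / (2 * t) - 2 * k * t ^ ((3 : ℝ) / 2) / (5 * c2))) := by
  have hσ : t ^ ((1 : ℝ) / 2) ≠ 0 := (rpow_pos_of_pos ht _).ne'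
  rw [gnlsAmplitude]
  field_simp
  ring

end

theorem stmt10_general (k c1 c2 : ℝ) (hc2 : 0 < c2) :
    ∀ t r : ℝ, 0 < t → 0 < r →
      gnlsM1 k 2
        (fun t r => ((c2 / (r * (t ^ ((1 : ℝ) / 2) : ℝ)) : ℝ) : ℂ)
          * Complex.exp (Complex.I * c1 - Complex.I * r ^ 2 / (4 * t)
              - 2 * Complex.I * k * r * ((t ^ ((3 : ℝ) / 2) : ℝ) : ℂ) / (5 * c2)
              + Complex.I * k ^ 2 * t ^ 4 / (25 * c2 ^ 2))) t r := by
  intro t r ht hr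
  convert gnlsM1_of_amplitude_phase (hasDerivAt_gnlsAmplitude_time ht hr.ne')
    (hasDerivAt_gnlsPhase_time (c1 := c1) ht)
    ((eventually_ne_nhds hr.ne').mono fun s hs => hasDerivAt_gnlsAmplitude_radius ht hs)
    (.of_forall hasDerivAt_gnlsPhase_radius)
    (hasDerivAt_gnlsAmplitude_radius_deriv ht hr.ne') hasDerivAt_gnlsPhase_radius_deriv
    (by unfold gnlsAmplitude; positivity)
    (gnlsSolution_re hc2.ne' ht hr.ne') (gnlsSolution_im ht hr.ne') using 3
  simp only [gnlsAmplitude, gnlsPhase]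
  push_cast
  ring_nf

theorem stmt10 (k c1 c2 : ℝ) (hk : k ≠ 0) (hc2 : 0 < c2) :
    ∀ t r : ℝ, 0 < t → 0 < r →
      gnlsM1 k 2
        (fun t r => ((c2 / (r * (t ^ ((1 : ℝ) / 2) : ℝ)) : ℝ) : ℂ)
          * Complex.exp (Complex.I * c1 - Complex.I * r ^ 2 / (4 * t)
              - 2 * Complex.I * k * r * ((t ^ ((3 : ℝ) / 2) : ℝ) : ℂ) / (5 * c2)
              + Complex.I * k ^ 2 * t ^ 4 / (25 * c2 ^ 2))) t r :=
  stmt10_general k c1 c2 hc2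
end

section
/- Let n satisfy n² − n − 4 = 0, let p = 4/n, and let k > 0. Then u(t,r) = (c2² (8 − 3n)/k)^{n/4} · r^{2−n} t^{−2+n/2} · exp(i c1 − i r²/(4t) + i c2 r^{n−2} t^{2−n}) satisfies i u_t = u_{rr} + ((n−1)/r) u_r + k |u|^{4/n} u on the domain t > 0, r > 0, for any real c1 and c2 with c2² (8−3n)/k > 0. -/
/-!
The ansatz `u = A r^(2-n) t^(n/2-2) e^(iφ)` turns the equation into a scalar identity between
logarithmic derivatives: `u_t = u L_t`, `u_r = u L_r` and `u_rr = u (L_r² + L_r')`, while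
`|u|^(4/n)` is a monomial in `r^(n-2)`, `t^(2-n)` and `1/r` precisely because `n² - n = 4`.
Dividing by `u`, all terms cancel for every `n` except those in `c2² (r^(n-2) t^(2-n) / r)²`,
whose coefficient is `(8 - 3n) - (n - 2)² = -(n² - n - 4)`.
-/

open Real

open Complex (I)

theorem gnls_of_hasDerivAt {k p n t r : ℝ} {u : ℝ → ℝ → ℂ} {Lt Lr Lrr : ℂ}
    (h_t : HasDerivAt (fun s => u s r) (u t r * Lt) t)
    (h_r : HasDerivAt (fun s => u t s) (u t r * Lr) r)
    (h_rr : HasDerivAt (deriv fun s => u t s) (u t r * Lrr) r)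
    (h : I * Lt = Lrr + (((n - 1) / r : ℝ) : ℂ) * Lr + k * ((‖u t r‖ ^ p : ℝ) : ℂ)) :
    gnls k p n u t r := by
  rw [gnls, h_t.deriv, h_r.deriv, h_rr.deriv]
  linear_combination u t r * h

section PowerTimesExp

variable {e s : ℝ}

theorem hasDerivAt_ofReal_rpow_const (hs : 0 < s) :
    HasDerivAt (fun x : ℝ => ((x ^ e : ℝ) : ℂ)) (e * ((s ^ e : ℝ) : ℂ) / s) s := by
  convert (Real.hasDerivAt_rpow_const (p := e) (Or.inl hs.ne')).ofReal_comp using 1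
  rw [Real.rpow_sub_one hs.ne']
  push_cast
  ring

theorem hasDerivAt_mul_rpow_mul_cexp (C : ℂ) {φ : ℝ → ℂ} {φ' : ℂ} (hs : 0 < s)
    (hφ : HasDerivAt φ φ' s) :
    HasDerivAt (fun x => C * ((x ^ e : ℝ) : ℂ) * Complex.exp (φ x))
      (C * ((s ^ e : ℝ) : ℂ) * Complex.exp (φ s) * (e / s + φ')) s :=
  (((hasDerivAt_ofReal_rpow_const (e := e) hs).const_mul C).mul hφ.cexp).congr_deriv (by ring)

theorem hasDerivAt_deriv_mul_rpow_mul_cexp (C : ℂ) {φ φ' : ℝ → ℂ} {φ'' : ℂ} (hs : 0 < s)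
    (hφ : ∀ x, 0 < x → HasDerivAt φ (φ' x) x) (hφ' : HasDerivAt φ' φ'' s) :
    HasDerivAt (deriv fun x => C * ((x ^ e : ℝ) : ℂ) * Complex.exp (φ x))
      (C * ((s ^ e : ℝ) : ℂ) * Complex.exp (φ s) * ((e / s + φ' s) ^ 2 - e / s ^ 2 + φ'')) s := by
  have h_deriv : (deriv fun x => C * ((x ^ e : ℝ) : ℂ) * Complex.exp (φ x)) =ᶠ[nhds s]
      fun x => C * ((x ^ e : ℝ) : ℂ) * Complex.exp (φ x) * (e / x + φ' x) := by
    filter_upwards [Ioi_mem_nhds hs] with x hx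
    exact (hasDerivAt_mul_rpow_mul_cexp C hx (hφ x hx)).deriv
  have h_log : HasDerivAt (fun x : ℝ => (e : ℂ) / x + φ' x) (-e / s ^ 2 + φ'') s := by
    have hs' : (s : ℂ) ≠ 0 := by exact_mod_cast hs.ne'
    exact ((((hasDerivAt_inv hs').comp_ofReal).const_mul (e : ℂ)).add hφ').congr_deriv
      (by ring)
  refine HasDerivAt.congr_of_eventuallyEq ?_ h_deriv
  exact ((hasDerivAt_mul_rpow_mul_cexp C hs (hφ s hs)).mul h_log).congr_deriv (by ring)

end PowerTimesExp

noncomputable def phase (c1 c2 n t r : ℝ) : ℂ :=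
  I * c1 - I * r ^ 2 / (4 * t) + I * c2 * ((r ^ (n - 2) : ℝ) : ℂ) * ((t ^ (2 - n) : ℝ) : ℂ)

noncomputable def radialPhaseDeriv (c2 n t r : ℝ) : ℂ :=
  -(I * r / (2 * t)) + I * c2 * ((n - 2) * ((r ^ (n - 2) : ℝ) : ℂ) / r) * ((t ^ (2 - n) : ℝ) : ℂ)

section Phase

variable {c1 c2 n t r : ℝ}

theorem hasDerivAt_phase_time (ht : 0 < t) :
    HasDerivAt (fun s => phase c1 c2 n s r)
      (I * r ^ 2 / (4 * t ^ 2)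
        + I * c2 * ((r ^ (n - 2) : ℝ) : ℂ) * ((2 - n) * ((t ^ (2 - n) : ℝ) : ℂ) / t)) t := by
  have ht' : (t : ℂ) ≠ 0 := by exact_mod_cast ht.ne'
  have h_inv := ((hasDerivAt_inv ht').comp_ofReal).const_mul (-(I * r ^ 2 / 4))
  have h_pow := (hasDerivAt_ofReal_rpow_const (e := 2 - n) ht).const_mul
    (I * c2 * ((r ^ (n - 2) : ℝ) : ℂ))
  refine ((((hasDerivAt_const t (I * c1)).add h_inv).add h_pow).congr_deriv ?_)
    |>.congr_of_eventuallyEq (.of_forall fun s => ?_)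
  · push_cast
    field_simp
    ring
  · simp only [phase, Pi.add_apply]
    ring

theorem hasDerivAt_phase_radius (hr : 0 < r) :
    HasDerivAt (fun s => phase c1 c2 n t s) (radialPhaseDeriv c2 n t r) r := by
  have h_sq := ((hasDerivAt_pow 2 (r : ℂ)).comp_ofReal).const_mul (-(I / (4 * t)))
  have h_pow := ((hasDerivAt_ofReal_rpow_const (e := n - 2) hr).const_mul (I * c2)).mul_const
    ((t ^ (2 - n) : ℝ) : ℂ)
  refine ((((hasDerivAt_const r (I * c1)).add h_sq).add h_pow).congr_deriv ?_)
    |>.congr_of_eventuallyEq (.of_forall fun s => ?_)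
  · simp only [radialPhaseDeriv]
    push_cast
    ring
  · simp only [phase, Pi.add_apply]
    ring

theorem hasDerivAt_radialPhaseDeriv (hr : 0 < r) :
    HasDerivAt (fun s => radialPhaseDeriv c2 n t s)
      (-(I / (2 * t))
        + I * c2 * ((n - 2) * (n - 3) * ((r ^ (n - 2) : ℝ) : ℂ) / r ^ 2) * ((t ^ (2 - n) : ℝ) : ℂ))
      r := by
  have hr' : (r : ℂ) ≠ 0 := by exact_mod_cast hr.ne'
  have h_id : HasDerivAt (fun s : ℝ => (s : ℂ)) 1 r := (hasDerivAt_id r).ofReal_comp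
  have h_lin := h_id.const_mul (-(I / (2 * t)))
  have h_quot := ((((hasDerivAt_ofReal_rpow_const (e := n - 2) hr).const_mul ((n : ℂ) - 2)).div
    h_id hr').const_mul (I * c2)).mul_const ((t ^ (2 - n) : ℝ) : ℂ)
  refine ((h_lin.add h_quot).congr_deriv ?_).congr_of_eventuallyEq (.of_forall fun s => ?_)
  · push_cast
    field_simp
    ring
  · simp only [radialPhaseDeriv, Pi.add_apply, Pi.div_apply]
    ring

theorem norm_cexp_phase : ‖Complex.exp (phase c1 c2 n t r)‖ = 1 := by
  have h_real : phase c1 c2 n t r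
      = ((c1 - r ^ 2 / (4 * t) + c2 * r ^ (n - 2) * t ^ (2 - n) : ℝ) : ℂ) * I := by
    rw [phase]
    push_cast
    ring
  rw [h_real, Complex.norm_exp_ofReal_mul_I]

end Phase

theorem amplitude_rpow_four_div {n B r t : ℝ} (hn : n ^ 2 - n - 4 = 0) (hB : 0 < B) (hr : 0 < r)
    (ht : 0 < t) :
    (B ^ (n / 4) * r ^ (2 - n) * t ^ (-2 + n / 2)) ^ (4 / n)
      = B * ((r ^ (n - 2)) ^ 2 / r ^ 2 * (t ^ (2 - n)) ^ 2) := by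
  have hn0 : n ≠ 0 := by rintro rfl; norm_num at hn
  have h_B : n / 4 * (4 / n) = 1 := by field_simp
  have h_r : (2 - n) * (4 / n) = (n - 2) * 2 - 2 := by field_simp; linear_combination -2 * hn
  have h_t : (-2 + n / 2) * (4 / n) = (2 - n) * 2 := by field_simp; linear_combination 4 * hn
  rw [mul_rpow (by positivity) (by positivity), mul_rpow (by positivity) (by positivity),
    ← rpow_mul hB.le, ← rpow_mul hr.le, ← rpow_mul ht.le, h_B, h_r, h_t, rpow_one,
    rpow_sub hr, rpow_mul hr.le, rpow_mul ht.le]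
  norm_cast
  ring

theorem logDeriv_balance (n c2 k r t R T : ℂ) (hn : n ^ 2 - n - 4 = 0) (hk : k ≠ 0) (hr : r ≠ 0)
    (ht : t ≠ 0) :
    I * ((-2 + n / 2) / t + (I * r ^ 2 / (4 * t ^ 2) + I * c2 * R * ((2 - n) * T / t)))
      = ((2 - n) / r + (-(I * r / (2 * t)) + I * c2 * ((n - 2) * R / r) * T)) ^ 2 - (2 - n) / r ^ 2
        + (-(I / (2 * t)) + I * c2 * ((n - 2) * (n - 3) * R / r ^ 2) * T)
        + (n - 1) / r * ((2 - n) / r + (-(I * r / (2 * t)) + I * c2 * ((n - 2) * R / r) * T))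
        + k * (c2 ^ 2 * (8 - 3 * n) / k * (R ^ 2 / r ^ 2 * T ^ 2)) := by
  field_simp
  linear_combination 16 * t ^ 2 * c2 ^ 2 * R ^ 2 * T ^ 2 * (hn - (n - 2) ^ 2 * Complex.I_sq)

theorem stmt14_general (k n c1 c2 : ℝ) (hn : n ^ 2 - n - 4 = 0)
    (hc2 : 0 < c2 ^ 2 * (8 - 3 * n) / k) :
    ∀ t r : ℝ, 0 < t → 0 < r →
      gnls k (4 / n) n
        (fun t r => (((c2 ^ 2 * (8 - 3 * n) / k) ^ (n / 4) : ℝ) : ℂ)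
          * ((r ^ (2 - n) : ℝ) : ℂ) * ((t ^ (-2 + n / 2) : ℝ) : ℂ)
          * Complex.exp (Complex.I * c1 - Complex.I * r ^ 2 / (4 * t)
              + Complex.I * c2 * ((r ^ (n - 2) : ℝ) : ℂ) * ((t ^ (2 - n) : ℝ) : ℂ))) t r := by
  intro t r ht hr
  have hk : k ≠ 0 := by rintro rfl; simp at hc2
  simp only [← phase.eq_1]
  have h_radial : (fun s : ℝ => (((c2 ^ 2 * (8 - 3 * n) / k) ^ (n / 4) : ℝ) : ℂ)
        * ((s ^ (2 - n) : ℝ) : ℂ) * ((t ^ (-2 + n / 2) : ℝ) : ℂ) * Complex.exp (phase c1 c2 n t s))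
      = fun s => (((c2 ^ 2 * (8 - 3 * n) / k) ^ (n / 4) : ℝ) : ℂ) * ((t ^ (-2 + n / 2) : ℝ) : ℂ)
        * ((s ^ (2 - n) : ℝ) : ℂ) * Complex.exp (phase c1 c2 n t s) :=
    funext fun s => by ring
  refine gnls_of_hasDerivAt (hasDerivAt_mul_rpow_mul_cexp _ ht (hasDerivAt_phase_time ht))
    (Lr := ((2 - n : ℝ) : ℂ) / r + radialPhaseDeriv c2 n t r)
    (Lrr := (((2 - n : ℝ) : ℂ) / r + radialPhaseDeriv c2 n t r) ^ 2 - ((2 - n : ℝ) : ℂ) / r ^ 2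
      + (-(I / (2 * t)) + I * c2 * ((n - 2) * (n - 3) * ((r ^ (n - 2) : ℝ) : ℂ) / r ^ 2)
        * ((t ^ (2 - n) : ℝ) : ℂ))) ?_ ?_ ?_
  · rw [h_radial]
    exact (hasDerivAt_mul_rpow_mul_cexp _ hr (hasDerivAt_phase_radius hr)).congr_deriv (by ring)
  · rw [h_radial]
    exact (hasDerivAt_deriv_mul_rpow_mul_cexp _ hr (fun x hx => hasDerivAt_phase_radius hx)
      (hasDerivAt_radialPhaseDeriv hr)).congr_deriv (by ring)
  · rw [norm_mul, norm_mul, norm_mul, norm_cexp_phase, mul_one,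
      Complex.norm_of_nonneg (by positivity), Complex.norm_of_nonneg (by positivity),
      Complex.norm_of_nonneg (by positivity), amplitude_rpow_four_div hn hc2 hr ht,
      radialPhaseDeriv]
    push_cast
    linear_combination logDeriv_balance n c2 k r t (r ^ (n - 2) : ℝ) (t ^ (2 - n) : ℝ)
      (mod_cast hn) (mod_cast hk) (mod_cast hr.ne') (mod_cast ht.ne')

theorem stmt14 (k n c1 c2 : ℝ) (hk : 0 < k) (hn : n ^ 2 - n - 4 = 0)
    (hc2 : 0 < c2 ^ 2 * (8 - 3 * n) / k) :
    ∀ t r : ℝ, 0 < t → 0 < r →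
      gnls k (4 / n) n
        (fun t r => (((c2 ^ 2 * (8 - 3 * n) / k) ^ (n / 4) : ℝ) : ℂ)
          * ((r ^ (2 - n) : ℝ) : ℂ) * ((t ^ (-2 + n / 2) : ℝ) : ℂ)
          * Complex.exp (Complex.I * c1 - Complex.I * r ^ 2 / (4 * t)
              + Complex.I * c2 * ((r ^ (n - 2) : ℝ) : ℂ) * ((t ^ (2 - n) : ℝ) : ℂ))) t r :=
  stmt14_general k n c1 c2 hn hc2
end
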